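/- Fix an integer k ≥ 1 and points z₁,…,z_k ∈ ℂ with 0 < |z_l| < 1 for all l, and set x₀ = Π_{l=1}^k |z_l|². Let Q_j be the coefficient of s^j in det[ s/(1 − z_i \bar{z}_j) + z_i \bar{z}_j/(1 − z_i \bar{z}_j)² ]_{i,j=1}^k, and for t > 0 define F_0^{(t)}(x) = x^{−1} e^{−t/x} on (0,∞) and F_{l+1}^{(t)}(x) = d/dx [ x·F_l^{(t)}(x) ]. Then: (i) Q_0 = x₀ · det[ 1/(1 − z_i \bar{z}_j)² ]_{i,j=1}^k; and (ii) lim_{t→0⁺} e^{t} Σ_{l=0}^k Q_l · F_l^{(t)}(x₀) = det[ 1/(1 − z_i \bar{z}_j)² ]_{i,j=1}^k. -/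

import Mathlib

open Matrix Polynomial ComplexConjugate Filter

/-!
For `x > 0` the iterates are `F_l^{(t)}(x) = e^{-t/x} P_l(t, 1/x)` for polynomials `P_l`, so they
are continuous in `t`. At `t = 0` we get `F_0 = 1/x`, and `x · F_0 = 1` has derivative `0`, so
`F_l^{(0)} = 0` for `l ≥ 1`: the limit is `Q₀ / x₀`. Setting `s = 0` in the determinant leaves
`det[z_i z̄_j / (1 - z_i z̄_j)²]`, from which row and column scaling pull out `∏ z_i z̄_i = x₀`.
-/

/-- The operator `f ↦ d/dx (x·f(x))`, iterated. -/
noncomputable def iterD (f : ℝ → ℝ) : ℕ → ℝ → ℝ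
  | 0 => f
  | (l + 1) => deriv (fun x => x * iterD f l x)

/-- The coefficient of `s^j` in the polynomial (in `s`)
`det [ s·g(z_i z̄_{i'}) + h(z_i z̄_{i'}) ]_{i,i'=1}^k`. -/
noncomputable def coefDet {k : ℕ} (g h : ℂ → ℂ) (z : Fin k → ℂ) (j : ℕ) : ℂ :=
  (Matrix.det (Matrix.of fun i i' : Fin k =>
    Polynomial.C (g (z i * conj (z i'))) * Polynomial.X
      + Polynomial.C (h (z i * conj (z i'))))).coeff j

theorem Matrix.det_of_mul_conj_mul {n : Type*} [Fintype n] [DecidableEq n]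
    (z : n → ℂ) (M : Matrix n n ℂ) :
    det (of fun i j => z i * conj (z j) * M i j) =
      ((∏ i, ‖z i‖ ^ 2 : ℝ) : ℂ) * det M := by
  have h := det_mul_column z (of fun i j => conj (z j) * M i j)
  simp only [of_apply, det_mul_row, ← mul_assoc] at h
  rw [h, ← Finset.prod_mul_distrib]
  push_cast
  simp only [Complex.mul_conj, Complex.normSq_eq_norm_sq]
  push_cast
  ring

theorem coefDet_zero {k : ℕ} (g h : ℂ → ℂ) (z : Fin k → ℂ) :
    coefDet g h z 0 = det (of fun i j => h (z i * conj (z j))) := by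
  rw [coefDet, ← coeff_det_X_add_C_zero (of fun i j => g (z i * conj (z j)))]
  congr 3
  ext i j : 1
  simp only [Matrix.add_apply, Matrix.smul_apply, map_apply, of_apply, smul_eq_mul, mul_comm X]

/-- `P_l` with `iterD (x ↦ x⁻¹ e^{-t/x}) l x = e^{-t/x} P_l(t, 1/x)`: `t` is the inner and `1/x`
the outer variable. -/
noncomputable def invExpPoly : ℕ → ℝ[X][X]
  | 0 => X
  | l + 1 => (1 + C X * X) * invExpPoly l - X * derivative (invExpPoly l)

theorem hasDerivAt_mul_exp_mul_eval_inv (P : ℝ[X]) (t : ℝ) {x : ℝ} (hx : x ≠ 0) :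
    HasDerivAt (fun y => y * (Real.exp (-t / y) * P.eval y⁻¹))
      (Real.exp (-t / x) * ((1 + C t * X) * P - X * derivative P).eval x⁻¹) x := by
  have hinv : HasDerivAt (fun y : ℝ => y⁻¹) (-(x ^ 2)⁻¹) x := hasDerivAt_inv hx
  have hexp : HasDerivAt (fun y : ℝ => Real.exp (-t / y))
      (Real.exp (-t / x) * (-t * -(x ^ 2)⁻¹)) x := by
    simpa only [div_eq_mul_inv] using (hinv.const_mul (-t)).exp
  have hP : HasDerivAt (fun y : ℝ => P.eval y⁻¹) (P.derivative.eval x⁻¹ * -(x ^ 2)⁻¹) x :=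
    (P.hasDerivAt x⁻¹).comp x hinv
  refine ((hasDerivAt_id' x).mul (hexp.mul hP)).congr_deriv ?_
  simp only [eval_sub, eval_mul, eval_add, eval_one, eval_C, eval_X, Pi.mul_apply]
  field_simp
  ring

theorem iterD_inv_mul_exp (t : ℝ) (l : ℕ) {x : ℝ} (hx : 0 < x) :
    iterD (fun x => x⁻¹ * Real.exp (-t / x)) l x =
      Real.exp (-t / x) * (invExpPoly l).evalEval t x⁻¹ := by
  induction l generalizing x with
  | zero => simp [iterD, invExpPoly, mul_comm]
  | succ l ih =>
    have hloc : (fun y => y * iterD (fun x => x⁻¹ * Real.exp (-t / x)) l y)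
        =ᶠ[nhds x]
          fun y => y * (Real.exp (-t / y) * ((invExpPoly l).map (evalRingHom t)).eval y⁻¹) := by
      filter_upwards [Ioi_mem_nhds hx] with y hy
      rw [ih hy, map_evalRingHom_eval]
    rw [iterD, hloc.deriv_eq, (hasDerivAt_mul_exp_mul_eval_inv _ t hx.ne').deriv,
      ← map_evalRingHom_eval, invExpPoly]
    simp [derivative_map]

theorem map_evalRingHom_zero_invExpPoly_succ (l : ℕ) :
    (invExpPoly (l + 1)).map (evalRingHom 0) = 0 := by
  induction l with
  | zero => simp [invExpPoly]
  | succ l ih =>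
    rw [invExpPoly, Polynomial.map_sub, Polynomial.map_mul, ih, Polynomial.map_mul,
      ← derivative_map, ih]
    simp

theorem tendsto_iterD_inv_mul_exp (l : ℕ) {x : ℝ} (hx : 0 < x) :
    Tendsto (fun t => iterD (fun x => x⁻¹ * Real.exp (-t / x)) l x) (nhds 0)
      (nhds (if l = 0 then x⁻¹ else 0)) := by
  simp_rw [iterD_inv_mul_exp _ l hx]
  have hcont : Continuous fun t => Real.exp (-t / x) * (invExpPoly l).evalEval t x⁻¹ := by
    unfold evalEval; fun_prop
  convert hcont.tendsto 0 using 2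
  rw [← map_evalRingHom_eval]
  rcases l with _ | l
  · simp [invExpPoly]
  · simp [map_evalRingHom_zero_invExpPoly_succ]

theorem stmt7_general (k : ℕ) (z : Fin k → ℂ)
    (hz : ∀ l, 0 < ‖z l‖ ∧ ‖z l‖ < 1) :
    coefDet (fun x => (1 - x)⁻¹) (fun x => x / (1 - x) ^ 2) z 0
      = ((∏ l', ‖z l'‖ ^ 2 : ℝ) : ℂ) *
          Matrix.det (Matrix.of fun i i' : Fin k => ((1 - z i * conj (z i')) ^ 2)⁻¹) ∧
    Tendsto (fun t : ℝ =>
        (Real.exp t : ℂ) *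
          ∑ l ∈ Finset.range (k + 1),
            coefDet (fun x => (1 - x)⁻¹) (fun x => x / (1 - x) ^ 2) z l *
              ((iterD (fun x => x⁻¹ * Real.exp (-t / x)) l
                  (∏ l', ‖z l'‖ ^ 2) : ℝ) : ℂ))
      (nhdsWithin 0 (Set.Ioi 0))
      (nhds (Matrix.det (Matrix.of fun i i' : Fin k => ((1 - z i * conj (z i')) ^ 2)⁻¹))) := by
  set x₀ : ℝ := ∏ l', ‖z l'‖ ^ 2
  set Q := coefDet (fun x => (1 - x)⁻¹) (fun x => x / (1 - x) ^ 2) z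
  set D := det (of fun i i' : Fin k => ((1 - z i * conj (z i')) ^ 2)⁻¹)
  have hQ₀ : Q 0 = x₀ * D := by
    refine (coefDet_zero _ _ z).trans ?_
    rw [← det_of_mul_conj_mul]
    simp only [div_eq_mul_inv, of_apply]
  refine ⟨hQ₀, ?_⟩
  have hx₀ : 0 < x₀ := Finset.prod_pos fun l _ => pow_pos (hz l).1 2
  have hlim : Tendsto (fun t : ℝ => (Real.exp t : ℂ) * ∑ l ∈ Finset.range (k + 1),
        Q l * (iterD (fun x => x⁻¹ * Real.exp (-t / x)) l x₀ : ℂ)) (nhds 0)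
      (nhds ((Real.exp 0 : ℂ) * ∑ l ∈ Finset.range (k + 1),
        Q l * ((if l = 0 then x₀⁻¹ else 0 : ℝ) : ℂ))) :=
    ((Complex.continuous_ofReal.comp Real.continuous_exp).tendsto 0).mul
      (tendsto_finsetSum _ fun l _ => ((Complex.continuous_ofReal.tendsto _).comp
        (tendsto_iterD_inv_mul_exp l hx₀)).const_mul _)
  convert hlim.mono_left nhdsWithin_le_nhds using 2
  have hx₀' : (x₀ : ℂ) ≠ 0 := Complex.ofReal_ne_zero.2 hx₀.ne'
  rw [Finset.sum_eq_single 0 (fun l _ hl => by simp [hl]) (by simp), if_pos rfl, hQ₀,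
    Real.exp_zero, Complex.ofReal_one, one_mul, Complex.ofReal_inv, mul_comm,
    inv_mul_cancel_left₀ hx₀']

/-- (i) `Q₀ = x₀ · det[1/(1 − z_i z̄_j)²]`; (ii) as `t → 0⁺` the limiting
`k`-point correlation `e^t Σ_{l=0}^k Q_l F_l^{(t)}(x₀)` reduces to the
determinantal form `det[1/(1 − z_i z̄_j)²]`. -/
theorem stmt7 (k : ℕ) (hk : 1 ≤ k) (z : Fin k → ℂ)
    (hz : ∀ l, 0 < ‖z l‖ ∧ ‖z l‖ < 1) :
    coefDet (fun x => (1 - x)⁻¹) (fun x => x / (1 - x) ^ 2) z 0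
      = ((∏ l', ‖z l'‖ ^ 2 : ℝ) : ℂ) *
          Matrix.det (Matrix.of fun i i' : Fin k => ((1 - z i * conj (z i')) ^ 2)⁻¹) ∧
    Tendsto (fun t : ℝ =>
        (Real.exp t : ℂ) *
          ∑ l ∈ Finset.range (k + 1),
            coefDet (fun x => (1 - x)⁻¹) (fun x => x / (1 - x) ^ 2) z l *
              ((iterD (fun x => x⁻¹ * Real.exp (-t / x)) l
                  (∏ l', ‖z l'‖ ^ 2) : ℝ) : ℂ))
      (nhdsWithin 0 (Set.Ioi 0))
      (nhds (Matrix.det (Matrix.of fun i i' : Fin k => ((1 - z i * conj (z i')) ^ 2)⁻¹))) :=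
  stmt7_general k z hz
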